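/- Let H = H₁ ⊕ H₂ with orthogonal projections {P_m} such that each P_m projects into either H₁ or H₂ (i.e., the index set splits as Λ₁ ⊔ Λ₂ with P_m ≤ Π_1 for m ∈ Λ₁ and P_m ≤ Π_2 for m ∈ Λ₂, where Π_i projects onto H_i). If ρ = p ρ₁ ⊕ (1-p) ρ₂ with ρ_i a density operator on H_i and 0 ≤ p ≤ 1, then C(ρ) = p C(ρ₁) + (1-p) C(ρ₂), where C(τ) = 1 - Σ_m Tr[(P_m √τ P_m)^2] (restricting the sum to the relevant blocks for ρ₁, ρ₂). -/

import Mathlib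

/-!
The positive square root of a block-diagonal state is block-diagonal, with the scalars
pulled out as square roots: `√(p ρ₁ ⊕ (1-p) ρ₂) = √p √ρ₁ ⊕ √(1-p) √ρ₂`, by uniqueness of
the positive square root. A projection `P m` inside `H₁` only sees the first block, so
`P m √ρ P m = √p • P m (√ρ₁ ⊕ 0) P m` and the corresponding term of the sum is scaled by `p`;
likewise by `1 - p` inside `H₂`. Splitting the sum along `Λ₁ ⊔ Λ₂` and using `p + (1 - p) = 1`
gives the identity.
-/

open scoped ComplexOrder

open Classical in
/-- The positive semidefinite square root of a matrix (zero if not psd). -/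
noncomputable def msqrt {n : Type*} [Fintype n] [DecidableEq n]
    (ρ : Matrix n n ℂ) : Matrix n n ℂ :=
  if h : ρ.PosSemidef then
    (h.1.eigenvectorUnitary : Matrix n n ℂ) *
      Matrix.diagonal ((↑) ∘ (√·) ∘ h.1.eigenvalues) *
      (star (h.1.eigenvectorUnitary : Matrix n n ℂ))
  else 0

open scoped MatrixOrder
open Matrix

section msqrt

variable {n k : Type*} [Fintype n] [DecidableEq n] [Fintype k] [DecidableEq k]

lemma msqrt_eq_cfcSqrt {ρ : Matrix n n ℂ} (hρ : ρ.PosSemidef) : msqrt ρ = CFC.sqrt ρ := by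
  rw [CFC.sqrt_eq_cfc, cfc_nnreal_eq_real _ ρ hρ.nonneg, hρ.1.cfc_eq]
  simp only [msqrt, dif_pos hρ, IsHermitian.cfc, Unitary.conjStarAlgAut_apply]
  congr 3
  funext i
  simp [hρ.eigenvalues_nonneg i]

lemma posSemidef_msqrt (ρ : Matrix n n ℂ) : (msqrt ρ).PosSemidef := by
  by_cases hρ : ρ.PosSemidef
  · rw [msqrt_eq_cfcSqrt hρ, ← nonneg_iff_posSemidef]
    exact CFC.sqrt_nonneg ρ
  · simpa [msqrt, dif_neg hρ] using PosSemidef.zero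

lemma msqrt_sq {ρ : Matrix n n ℂ} (hρ : ρ.PosSemidef) : msqrt ρ ^ 2 = ρ := by
  rw [msqrt_eq_cfcSqrt hρ, CFC.sq_sqrt ρ hρ.nonneg]

lemma msqrt_eq_of_sq_eq {ρ σ : Matrix n n ℂ} (hσ : σ.PosSemidef) (h : σ ^ 2 = ρ) :
    msqrt ρ = σ := by
  have hρ : ρ.PosSemidef := by
    simpa [← h, sq, hσ.1.eq] using posSemidef_conjTranspose_mul_self σ
  rw [msqrt_eq_cfcSqrt hρ]
  exact CFC.sqrt_unique (by rw [← sq, h]) hσ.nonneg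

lemma msqrt_zero : msqrt (0 : Matrix n n ℂ) = 0 :=
  msqrt_eq_of_sq_eq .zero (by simp)

lemma msqrt_real_smul {ρ : Matrix n n ℂ} (hρ : ρ.PosSemidef) {r : ℝ} (hr : 0 ≤ r) :
    msqrt ((r : ℂ) • ρ) = (√r : ℂ) • msqrt ρ := by
  refine msqrt_eq_of_sq_eq ((posSemidef_msqrt ρ).smul (by positivity)) ?_
  rw [smul_pow, msqrt_sq hρ, ← Complex.ofReal_pow, Real.sq_sqrt hr]

lemma Matrix.PosSemidef.fromBlocks_zero {A : Matrix n n ℂ} {D : Matrix k k ℂ}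
    (hA : A.PosSemidef) (hD : D.PosSemidef) : (fromBlocks A 0 0 D).PosSemidef := by
  have h := posSemidef_conjTranspose_mul_self (fromBlocks (msqrt A) 0 0 (msqrt D))
  rw [fromBlocks_conjTranspose, fromBlocks_multiply, (posSemidef_msqrt A).1.eq,
    (posSemidef_msqrt D).1.eq, ← sq, ← sq, msqrt_sq hA, msqrt_sq hD] at h
  simpa using h

lemma msqrt_fromBlocks_zero {A : Matrix n n ℂ} {D : Matrix k k ℂ}
    (hA : A.PosSemidef) (hD : D.PosSemidef) :
    msqrt (fromBlocks A 0 0 D) = fromBlocks (msqrt A) 0 0 (msqrt D) := by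
  refine msqrt_eq_of_sq_eq ((posSemidef_msqrt A).fromBlocks_zero (posSemidef_msqrt D)) ?_
  rw [sq, fromBlocks_multiply, ← sq, ← sq, msqrt_sq hA, msqrt_sq hD]
  simp

end msqrt

section compress

variable {n k R : Type*} [Fintype n] [DecidableEq n] [Fintype k] [DecidableEq k] [Ring R]

lemma mul_fromBlocks_mul_eq_of_le_fst {P : Matrix (n ⊕ k) (n ⊕ k) R}
    (hl : P * fromBlocks 1 0 0 0 = P) (hr : fromBlocks 1 0 0 0 * P = P)
    (A : Matrix n n R) (B : Matrix n k R) (C : Matrix k n R) (D : Matrix k k R) :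
    P * fromBlocks A B C D * P = P * fromBlocks A 0 0 0 * P := by
  have hcut : fromBlocks 1 0 0 0 * fromBlocks A B C D * fromBlocks 1 0 0 0 =
      fromBlocks A 0 0 (0 : Matrix k k R) := by
    simp [fromBlocks_multiply]
  calc P * fromBlocks A B C D * P
      = P * fromBlocks 1 0 0 0 * fromBlocks A B C D * (fromBlocks 1 0 0 0 * P) := by rw [hl, hr]
    _ = P * (fromBlocks 1 0 0 0 * fromBlocks A B C D * fromBlocks 1 0 0 0) * P := by
      simp only [mul_assoc]
    _ = P * fromBlocks A 0 0 0 * P := by rw [hcut]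

lemma mul_fromBlocks_mul_eq_of_le_snd {P : Matrix (n ⊕ k) (n ⊕ k) R}
    (hl : P * fromBlocks 0 0 0 1 = P) (hr : fromBlocks 0 0 0 1 * P = P)
    (A : Matrix n n R) (B : Matrix n k R) (C : Matrix k n R) (D : Matrix k k R) :
    P * fromBlocks A B C D * P = P * fromBlocks 0 0 0 D * P := by
  have hcut : fromBlocks 0 0 0 1 * fromBlocks A B C D * fromBlocks 0 0 0 1 =
      fromBlocks (0 : Matrix n n R) 0 0 D := by
    simp [fromBlocks_multiply]
  calc P * fromBlocks A B C D * P
      = P * fromBlocks 0 0 0 1 * fromBlocks A B C D * (fromBlocks 0 0 0 1 * P) := by rw [hl, hr]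
    _ = P * (fromBlocks 0 0 0 1 * fromBlocks A B C D * fromBlocks 0 0 0 1) * P := by
      simp only [mul_assoc]
    _ = P * fromBlocks 0 0 0 D * P := by rw [hcut]

end compress

lemma re_trace_sq_mul_sqrt_smul_mul {n : Type*} [Fintype n] [DecidableEq n]
    (P X : Matrix n n ℂ) {r : ℝ} (hr : 0 ≤ r) :
    ((P * ((√r : ℂ) • X) * P) ^ 2).trace.re = r * ((P * X * P) ^ 2).trace.re := by
  rw [Matrix.mul_smul, Matrix.smul_mul, smul_pow, trace_smul, ← Complex.ofReal_pow,
    Real.sq_sqrt hr, smul_eq_mul, Complex.re_ofReal_mul]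

theorem affinity_coherence_additive_general {d₁ d₂ M : ℕ}
    (P : Fin M → Matrix (Fin d₁ ⊕ Fin d₂) (Fin d₁ ⊕ Fin d₂) ℂ)
    (Λ₁ Λ₂ : Finset (Fin M)) (hdisj : Disjoint Λ₁ Λ₂) (hcover : Λ₁ ∪ Λ₂ = Finset.univ)
    (hΛ₁ : ∀ m ∈ Λ₁, P m * Matrix.fromBlocks 1 0 0 0 = P m ∧
      Matrix.fromBlocks 1 0 0 0 * P m = P m)
    (hΛ₂ : ∀ m ∈ Λ₂, P m * Matrix.fromBlocks 0 0 0 1 = P m ∧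
      Matrix.fromBlocks 0 0 0 1 * P m = P m)
    (ρ₁ : Matrix (Fin d₁) (Fin d₁) ℂ) (hρ₁ : ρ₁.PosSemidef)
    (ρ₂ : Matrix (Fin d₂) (Fin d₂) ℂ) (hρ₂ : ρ₂.PosSemidef)
    (p : ℝ) (hp0 : 0 ≤ p) (hp1 : p ≤ 1) :
    1 - ∑ m, ((P m * msqrt (Matrix.fromBlocks ((p : ℂ) • ρ₁) 0 0
          (((1 - p : ℝ) : ℂ) • ρ₂)) * P m) ^ 2).trace.re =
      p * (1 - ∑ m ∈ Λ₁, ((P m * msqrt (Matrix.fromBlocks ρ₁ 0 0 0) * P m) ^ 2).trace.re) +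
      (1 - p) * (1 - ∑ m ∈ Λ₂, ((P m * msqrt (Matrix.fromBlocks 0 0 0 ρ₂) * P m) ^ 2).trace.re) := by
  have hq0 : 0 ≤ 1 - p := sub_nonneg.mpr hp1
  have hsqrt : msqrt (fromBlocks ((p : ℂ) • ρ₁) 0 0 (((1 - p : ℝ) : ℂ) • ρ₂)) =
      fromBlocks ((√p : ℂ) • msqrt ρ₁) 0 0 ((√(1 - p) : ℂ) • msqrt ρ₂) := by
    rw [msqrt_fromBlocks_zero (hρ₁.smul (by positivity)) (hρ₂.smul (by positivity)),
      msqrt_real_smul hρ₁ hp0, msqrt_real_smul hρ₂ hq0]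
  have hterm₁ : ∀ m ∈ Λ₁, ((P m * msqrt (fromBlocks ((p : ℂ) • ρ₁) 0 0
      (((1 - p : ℝ) : ℂ) • ρ₂)) * P m) ^ 2).trace.re =
      p * ((P m * msqrt (fromBlocks ρ₁ 0 0 0) * P m) ^ 2).trace.re := fun m hm => by
    rw [hsqrt, mul_fromBlocks_mul_eq_of_le_fst (hΛ₁ m hm).1 (hΛ₁ m hm).2,
      msqrt_fromBlocks_zero hρ₁ .zero, msqrt_zero, ← re_trace_sq_mul_sqrt_smul_mul _ _ hp0]
    simp [fromBlocks_smul]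
  have hterm₂ : ∀ m ∈ Λ₂, ((P m * msqrt (fromBlocks ((p : ℂ) • ρ₁) 0 0
      (((1 - p : ℝ) : ℂ) • ρ₂)) * P m) ^ 2).trace.re =
      (1 - p) * ((P m * msqrt (fromBlocks 0 0 0 ρ₂) * P m) ^ 2).trace.re := fun m hm => by
    rw [hsqrt, mul_fromBlocks_mul_eq_of_le_snd (hΛ₂ m hm).1 (hΛ₂ m hm).2,
      msqrt_fromBlocks_zero .zero hρ₂, msqrt_zero, ← re_trace_sq_mul_sqrt_smul_mul _ _ hq0]
    simp [fromBlocks_smul]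
  rw [← hcover, Finset.sum_union hdisj, Finset.sum_congr rfl hterm₁, Finset.sum_congr rfl hterm₂,
    ← Finset.mul_sum, ← Finset.mul_sum]
  ring

/-- Additivity of the generalized 1/2-affinity of coherence for block-diagonal
states `ρ = p ρ₁ ⊕ (1-p) ρ₂` on `H = H₁ ⊕ H₂`, where each projection `P m`
projects into `H₁` (for `m ∈ Λ₁`) or into `H₂` (for `m ∈ Λ₂`). -/
theorem affinity_coherence_additive {d₁ d₂ M : ℕ}
    (P : Fin M → Matrix (Fin d₁ ⊕ Fin d₂) (Fin d₁ ⊕ Fin d₂) ℂ)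
    (hPh : ∀ m, (P m).IsHermitian) (hPi : ∀ m, P m * P m = P m)
    (hPo : ∀ m m', m ≠ m' → P m * P m' = 0) (hPs : ∑ m, P m = 1)
    (Λ₁ Λ₂ : Finset (Fin M)) (hdisj : Disjoint Λ₁ Λ₂) (hcover : Λ₁ ∪ Λ₂ = Finset.univ)
    (hΛ₁ : ∀ m ∈ Λ₁, P m * Matrix.fromBlocks 1 0 0 0 = P m ∧
      Matrix.fromBlocks 1 0 0 0 * P m = P m)
    (hΛ₂ : ∀ m ∈ Λ₂, P m * Matrix.fromBlocks 0 0 0 1 = P m ∧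
      Matrix.fromBlocks 0 0 0 1 * P m = P m)
    (ρ₁ : Matrix (Fin d₁) (Fin d₁) ℂ) (hρ₁ : ρ₁.PosSemidef) (hρ₁tr : ρ₁.trace = 1)
    (ρ₂ : Matrix (Fin d₂) (Fin d₂) ℂ) (hρ₂ : ρ₂.PosSemidef) (hρ₂tr : ρ₂.trace = 1)
    (p : ℝ) (hp0 : 0 ≤ p) (hp1 : p ≤ 1) :
    1 - ∑ m, ((P m * msqrt (Matrix.fromBlocks ((p : ℂ) • ρ₁) 0 0
          (((1 - p : ℝ) : ℂ) • ρ₂)) * P m) ^ 2).trace.re =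
      p * (1 - ∑ m ∈ Λ₁, ((P m * msqrt (Matrix.fromBlocks ρ₁ 0 0 0) * P m) ^ 2).trace.re) +
      (1 - p) * (1 - ∑ m ∈ Λ₂, ((P m * msqrt (Matrix.fromBlocks 0 0 0 ρ₂) * P m) ^ 2).trace.re) :=
  affinity_coherence_additive_general P Λ₁ Λ₂ hdisj hcover hΛ₁ hΛ₂ ρ₁ hρ₁ ρ₂ hρ₂ p hp0 hp1
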